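/- Let f be a univariate real polynomial of degree at most 2d, let a, b ∈ ℝ with (a,b) ≠ (0,0), and let A = aR + bS be the (d+2)×(d+1) real matrix where R is the matrix with R_{i+1,i} = 1 for i = 1,…,d+1 and zeros elsewhere, and S is the matrix with S_{i,i} = 1 for i = 1,…,d+1 and zeros elsewhere. Then the map M ↦ A M Aᵀ is an injective affine (indeed linear) map that carries the Gram spectrahedron of f bijectively onto the Gram spectrahedron of (ax+b)²·f. -/

import Mathlib

/-!
Multiplication by `ax + b` on coefficient vectors is the matrix `A`, so the Gram polynomial of
`A M Aᵀ` is `(ax + b)²` times that of `M`; this gives the inclusion and, since `A` has full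
column rank, injectivity. For surjectivity write a Gram matrix `Q = Lᵀ L` of `(ax + b)² f`.
The Veronese vector `e = ((-b)ⁱ a^(d+1-i))ᵢ` of the root `(-b : a)` of the binary form
`ax + by` spans the left kernel of `A`, and `eᵀ Q e` is the homogenization of `(ax + b)² f`
evaluated at that root, hence `0`. So `L e = 0`, the rows of `L` lie in `e^⊥ = range A`
(a dimension count), i.e. `L = N Aᵀ`, and `Q = A (Nᵀ N) Aᵀ`.
-/

open Polynomial Finset Matrix

/-- The Gram spectrahedron of a univariate real polynomial `g` of degree at most `2m`:
the set of positive semidefinite real symmetric `(m+1) × (m+1)` matrices `Q` with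
`g = Xᵀ Q X`, where `X = (1, x, …, x^m)ᵀ`. -/
def GramS (m : ℕ) (g : Polynomial ℝ) : Set (Matrix (Fin (m + 1)) (Fin (m + 1)) ℝ) :=
  {Q | Q.PosSemidef ∧
    g = ∑ i : Fin (m + 1), ∑ j : Fin (m + 1), C (Q i j) * X ^ ((i : ℕ) + (j : ℕ))}

/-- The `(d+2) × (d+1)` matrix `R` with `R_{i+1,i} = 1` and zeros elsewhere. -/
def Rmat (d : ℕ) : Matrix (Fin (d + 2)) (Fin (d + 1)) ℝ :=
  fun i j => if (i : ℕ) = (j : ℕ) + 1 then 1 else 0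

/-- The `(d+2) × (d+1)` matrix `S` with `S_{i,i} = 1` and zeros elsewhere. -/
def Smat (d : ℕ) : Matrix (Fin (d + 2)) (Fin (d + 1)) ℝ :=
  fun i j => if (i : ℕ) = (j : ℕ) then 1 else 0

open scoped MatrixOrder

namespace Matrix

variable {m n : Type*} [Fintype n]

theorem mul_right_injective_of_mulVec_injective {l R : Type*} [NonUnitalNonAssocSemiring R]
    {A : Matrix m n R} (hA : Function.Injective A.mulVec) :
    Function.Injective fun X : Matrix n l R => A * X :=
  fun _ _ h => ext_col fun j => hA congr(($h).col j)

theorem injective_mul_mul_transpose {R : Type*} [CommSemiring R] {A : Matrix m n R}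
    (hA : Function.Injective A.mulVec) : Function.Injective fun M : Matrix n n R => A * M * Aᵀ := by
  intro M N h
  have h₁ : M * Aᵀ = N * Aᵀ :=
    mul_right_injective_of_mulVec_injective hA (by simpa only [Matrix.mul_assoc] using h)
  have h₂ := congrArg transpose h₁
  rw [transpose_mul, transpose_mul, transpose_transpose] at h₂
  exact transpose_injective (mul_right_injective_of_mulVec_injective hA h₂)

variable [Fintype m]

theorem exists_mulVec_eq_of_dotProduct_eq_zero {K : Type*} [Field K] [DecidableEq m]
    {A : Matrix m n K} (hA : Function.Injective A.mulVec) {e : m → K} (he : e ≠ 0)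
    (heA : ∀ w, e ⬝ᵥ A *ᵥ w = 0) (hcard : Fintype.card m = Fintype.card n + 1)
    {v : m → K} (hv : e ⬝ᵥ v = 0) : ∃ w, A *ᵥ w = v := by
  set φ := dotProductEquiv K m e
  have hφ : φ ≠ 0 := (dotProductEquiv K m).map_ne_zero_iff.mpr he
  have hle : LinearMap.range A.mulVecLin ≤ LinearMap.ker φ := by
    rintro _ ⟨w, rfl⟩
    exact heA w
  have hrange : LinearMap.range A.mulVecLin = LinearMap.ker φ := by
    refine Submodule.eq_of_le_of_finrank_eq hle ?_
    have hker := Module.Dual.finrank_ker_add_one_of_ne_zero hφ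
    rw [LinearMap.finrank_range_of_inj hA]
    simp only [Module.finrank_fintype_fun_eq_card] at hker ⊢
    omega
  exact hrange.ge hv

theorem exists_posSemidef_mul_mul_transpose_eq {A : Matrix m n ℝ} {e : m → ℝ}
    (hA : ∀ v, e ⬝ᵥ v = 0 → ∃ w, A *ᵥ w = v) {Q : Matrix m m ℝ} (hQ : Q.PosSemidef)
    (hQe : e ⬝ᵥ Q *ᵥ e = 0) : ∃ M : Matrix n n ℝ, M.PosSemidef ∧ A * M * Aᵀ = Q := by
  classical
  obtain ⟨L, rfl⟩ := CStarAlgebra.nonneg_iff_eq_star_mul_self.mp hQ.nonneg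
  have hLe : L *ᵥ e = 0 := by
    rw [← conjTranspose_mul_self_mulVec_eq_zero, ← star_eq_conjTranspose,
      ← hQ.dotProduct_mulVec_zero_iff, star_trivial]
    exact hQe
  choose N hN using fun i => hA (L i) (by rw [dotProduct_comm]; exact congrFun hLe i)
  have hL : L = of N * Aᵀ := by
    ext i j
    rw [← hN i]
    simp [mulVec, dotProduct, mul_apply, mul_comm]
  refine ⟨(of N)ᵀ * of N, ?_, ?_⟩
  · simpa [conjTranspose_eq_transpose_of_trivial] using posSemidef_conjTranspose_mul_self (of N)
  · rw [hL, star_eq_conjTranspose, conjTranspose_eq_transpose_of_trivial, transpose_mul,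
      transpose_transpose]
    simp only [Matrix.mul_assoc]

end Matrix

noncomputable def gramPoly {R : Type*} [CommSemiring R] {n : ℕ} (Q : Matrix (Fin n) (Fin n) R) :
    R[X] :=
  ∑ i : Fin n, ∑ j : Fin n, C (Q i j) * X ^ ((i : ℕ) + (j : ℕ))

theorem mem_GramS_iff {m : ℕ} {g : ℝ[X]} {Q : Matrix (Fin (m + 1)) (Fin (m + 1)) ℝ} :
    Q ∈ GramS m g ↔ Q.PosSemidef ∧ g = gramPoly Q :=
  Iff.rfl

noncomputable def monomialVec (R : Type*) [Semiring R] (n : ℕ) : Fin n → R[X] :=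
  fun i => X ^ (i : ℕ)

def veronese {R : Type*} [CommSemiring R] (x : Fin 2 → R) (n : ℕ) : Fin (n + 1) → R :=
  fun i => x 0 ^ (i : ℕ) * x 1 ^ (n - i)

section GramPoly

variable {R : Type*} [CommSemiring R]

theorem gramPoly_eq_dotProduct {n : ℕ} (Q : Matrix (Fin n) (Fin n) R) :
    gramPoly Q = monomialVec R n ⬝ᵥ Q.map C *ᵥ monomialVec R n := by
  simp only [gramPoly, monomialVec, dotProduct, mulVec, Matrix.map_apply, Finset.mul_sum]
  refine Finset.sum_congr rfl fun i _ => Finset.sum_congr rfl fun j _ => ?_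
  rw [pow_add]
  ring

theorem gramPoly_mul_mul_transpose {m n : ℕ} {A : Matrix (Fin m) (Fin n) R} {p : R[X]}
    (hA : (A.map C)ᵀ *ᵥ monomialVec R m = p • monomialVec R n) (M : Matrix (Fin n) (Fin n) R) :
    gramPoly (A * M * Aᵀ) = p ^ 2 * gramPoly M := by
  rw [gramPoly_eq_dotProduct, gramPoly_eq_dotProduct, Matrix.map_mul, Matrix.map_mul,
    transpose_map, ← mulVec_mulVec, ← mulVec_mulVec, dotProduct_mulVec, ← mulVec_transpose, hA,
    mulVec_smul, smul_dotProduct, dotProduct_smul, smul_eq_mul, smul_eq_mul]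
  ring

theorem ofFn_eq_dotProduct [DecidableEq R] {n : ℕ} (v : Fin n → R) :
    ofFn n v = monomialVec R n ⬝ᵥ fun i => C (v i) := by
  simp only [ofFn_eq_sum_monomial, dotProduct, monomialVec, ← C_mul_X_pow_eq_monomial]
  exact Finset.sum_congr rfl fun i _ => mul_comm _ _

theorem ofFn_mulVec [DecidableEq R] {m n : ℕ} {A : Matrix (Fin m) (Fin n) R} {p : R[X]}
    (hA : (A.map C)ᵀ *ᵥ monomialVec R m = p • monomialVec R n) (v : Fin n → R) :
    ofFn m (A *ᵥ v) = p * ofFn n v := by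
  have hmap : (fun i => C ((A *ᵥ v) i)) = A.map C *ᵥ fun i => C (v i) := by
    ext i
    simp [mulVec, dotProduct, map_sum]
  rw [ofFn_eq_dotProduct, ofFn_eq_dotProduct, hmap, dotProduct_mulVec, ← mulVec_transpose, hA,
    smul_dotProduct, smul_eq_mul]

theorem eval_homogenize_ofFn [DecidableEq R] {n : ℕ} (v : Fin (n + 1) → R) (x : Fin 2 → R) :
    MvPolynomial.eval x ((ofFn (n + 1) v).homogenize n) = veronese x n ⬝ᵥ v := by
  rw [ofFn_eq_sum_monomial, homogenize_finsetSum]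
  simp only [← C_mul_X_pow_eq_monomial, homogenize_C_mul]
  simp [homogenize_X_pow (Nat.lt_succ_iff.mp (Fin.is_lt _)), dotProduct, veronese, mul_comm]

theorem eval_homogenize_gramPoly {n : ℕ} (Q : Matrix (Fin (n + 1)) (Fin (n + 1)) R)
    (x : Fin 2 → R) :
    MvPolynomial.eval x ((gramPoly Q).homogenize (2 * n)) =
      veronese x n ⬝ᵥ Q *ᵥ veronese x n := by
  simp only [gramPoly, homogenize_finsetSum, homogenize_C_mul, map_sum, dotProduct, mulVec,
    Finset.mul_sum]
  refine Finset.sum_congr rfl fun i _ => Finset.sum_congr rfl fun j _ => ?_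
  have hij : (i : ℕ) + j ≤ 2 * n := by omega
  rw [homogenize_X_pow hij, show 2 * n - (i + j) = (n - i) + (n - j) by omega]
  simp only [veronese, map_mul, map_pow, MvPolynomial.eval_C, MvPolynomial.eval_X, pow_add]
  ring

end GramPoly

section LinearFactor

variable {d : ℕ} {a b : ℝ}

theorem Rmat_apply (i : Fin (d + 2)) (k : Fin (d + 1)) :
    Rmat d i k = if i = k.succ then 1 else 0 := by
  simp [Rmat, Fin.ext_iff]

theorem Smat_apply (i : Fin (d + 2)) (k : Fin (d + 1)) :
    Smat d i k = if i = k.castSucc then 1 else 0 := by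
  simp [Smat, Fin.ext_iff]

variable (d a b) in
theorem transpose_map_mulVec_monomialVec :
    ((a • Rmat d + b • Smat d).map C)ᵀ *ᵥ monomialVec ℝ (d + 2) =
      (C a * X + C b) • monomialVec ℝ (d + 1) := by
  ext1 k
  simp only [mulVec, dotProduct, transpose_apply, Matrix.map_apply, Matrix.add_apply,
    Matrix.smul_apply, Rmat_apply, Smat_apply, smul_eq_mul, mul_ite, mul_one, mul_zero, map_add,
    apply_ite C, map_zero, add_mul, ite_mul, zero_mul, Finset.sum_add_distrib, monomialVec,
    Finset.sum_ite_eq', Finset.mem_univ, if_true, Pi.smul_apply, Fin.val_succ,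
    Fin.val_castSucc]
  ring

theorem linearFactor_ne_zero (hab : (a, b) ≠ (0, 0)) : (C a * X + C b : ℝ[X]) ≠ 0 := by
  intro h
  have ha : a = 0 := by simpa using congrArg (coeff · 1) h
  have hb : b = 0 := by simpa using congrArg (coeff · 0) h
  exact hab (by rw [ha, hb])

theorem injective_mulVec_linearFactor (hab : (a, b) ≠ (0, 0)) :
    Function.Injective (a • Rmat d + b • Smat d).mulVec := by
  intro v w h
  have hpoly := congrArg (ofFn (d + 2)) h
  simp only [ofFn_mulVec (transpose_map_mulVec_monomialVec d a b)] at hpoly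
  exact injective_ofFn _ (mul_left_cancel₀ (linearFactor_ne_zero hab) hpoly)

variable (a b) in
theorem eval_homogenize_linearFactor :
    MvPolynomial.eval ![-b, a] ((C a * X + C b).homogenize 1) = 0 := by
  rw [homogenize_add, homogenize_C_mul, homogenize_X one_ne_zero, homogenize_C]
  simp only [map_add, map_mul, map_pow, MvPolynomial.eval_C, MvPolynomial.eval_X, cons_val_zero,
    cons_val_one, cons_val_fin_one]
  ring

theorem veronese_ne_zero (hab : (a, b) ≠ (0, 0)) : veronese ![-b, a] (d + 1) ≠ 0 := by
  intro h
  by_cases ha : a = 0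
  · have hb : b ≠ 0 := fun hb => hab (by rw [ha, hb])
    simpa [veronese, ha, hb] using congrFun h (Fin.last (d + 1))
  · simpa [veronese, ha] using congrFun h 0

variable (d a b) in
theorem veronese_dotProduct_mulVec_linearFactor (w : Fin (d + 1) → ℝ) :
    veronese ![-b, a] (d + 1) ⬝ᵥ (a • Rmat d + b • Smat d) *ᵥ w = 0 := by
  have hmul := homogenize_mul (C a * X + C b) (ofFn (d + 1) w) natDegree_linear_le
    (Nat.lt_succ_iff.mp (ofFn_natDegree_lt (Nat.succ_pos d) w))
  rw [add_comm 1 d] at hmul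
  rw [← eval_homogenize_ofFn, ofFn_mulVec (transpose_map_mulVec_monomialVec d a b), hmul,
    map_mul, eval_homogenize_linearFactor, zero_mul]

theorem veronese_dotProduct_mulVec_gram_eq_zero {f : ℝ[X]} (hdeg : f.natDegree ≤ 2 * d)
    {Q : Matrix (Fin (d + 2)) (Fin (d + 2)) ℝ} (hQ : (C a * X + C b) ^ 2 * f = gramPoly Q) :
    veronese ![-b, a] (d + 1) ⬝ᵥ Q *ᵥ veronese ![-b, a] (d + 1) = 0 := by
  rw [← eval_homogenize_gramPoly, ← hQ, show 2 * (d + 1) = (1 + 1) + 2 * d by ring,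
    homogenize_mul _ _ (natDegree_pow_le_of_le 2 natDegree_linear_le) hdeg, sq,
    homogenize_mul _ _ natDegree_linear_le natDegree_linear_le, map_mul, map_mul,
    eval_homogenize_linearFactor, zero_mul, zero_mul]

end LinearFactor

/-- For `f` univariate of degree at most `2d`, `(a, b) ≠ (0, 0)` and
`A = aR + bS`, the (linear, hence affine) map `M ↦ A M Aᵀ` is injective and carries the
Gram spectrahedron of `f` bijectively onto the Gram spectrahedron of `(ax + b)² · f`. -/
theorem stmt_10 (d : ℕ) (f : Polynomial ℝ) (hdeg : f.natDegree ≤ 2 * d)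
    (a b : ℝ) (hab : (a, b) ≠ (0, 0)) :
    Function.Injective
      (fun M : Matrix (Fin (d + 1)) (Fin (d + 1)) ℝ =>
        (a • Rmat d + b • Smat d) * M * (a • Rmat d + b • Smat d)ᵀ) ∧
    Set.BijOn
      (fun M : Matrix (Fin (d + 1)) (Fin (d + 1)) ℝ =>
        (a • Rmat d + b • Smat d) * M * (a • Rmat d + b • Smat d)ᵀ)
      (GramS d f) (GramS (d + 1) ((C a * X + C b) ^ 2 * f)) := by
  have hA := transpose_map_mulVec_monomialVec d a b
  have hinj := Matrix.injective_mul_mul_transpose (injective_mulVec_linearFactor (d := d) hab)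
  refine ⟨hinj, ?_, hinj.injOn, ?_⟩
  · intro M hM
    obtain ⟨hM, hf⟩ := mem_GramS_iff.mp hM
    refine mem_GramS_iff.mpr ⟨?_, by rw [hf, gramPoly_mul_mul_transpose hA]⟩
    simpa only [conjTranspose_eq_transpose_of_trivial] using hM.mul_mul_conjTranspose_same _
  · intro Q hQ
    obtain ⟨hQ, hf⟩ := mem_GramS_iff.mp hQ
    have hrange := fun v => Matrix.exists_mulVec_eq_of_dotProduct_eq_zero
      (injective_mulVec_linearFactor hab) (veronese_ne_zero hab)
      (veronese_dotProduct_mulVec_linearFactor d a b) (by simp) (v := v)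
    obtain ⟨M, hM, rfl⟩ :=
      Matrix.exists_posSemidef_mul_mul_transpose_eq hrange hQ
        (veronese_dotProduct_mulVec_gram_eq_zero hdeg hf)
    rw [gramPoly_mul_mul_transpose hA] at hf
    exact ⟨M, ⟨hM, mul_left_cancel₀ (pow_ne_zero 2 (linearFactor_ne_zero hab)) hf⟩, rfl⟩
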